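/- arXiv:1105.5853 — 2 statements merged into one kernel-verified Lean document; each statement's English description precedes it below -/
import Mathlib

section
/- Let Φ be an m×k real matrix and let I, J be disjoint index sets with I ∪ J = {1,…,k}. Let Φ_I, Φ_J denote the submatrices of Φ formed by the columns indexed by I and J, and let P_I = Id − Φ_I(Φ_I'Φ_I)^{-1}Φ_I' be the orthogonal projection onto the orthogonal complement of the column span of Φ_I (assuming Φ_I has full column rank). Then the minimum eigenvalue of Φ_J' P_I Φ_J is at least σ_min(Φ)², the square of the smallest singular value of Φ. -/
/-! Let `W = (Φ_Iᵀ Φ_I)⁻¹ Φ_Iᵀ Φ_J` be the coefficients of the least-squares regression of `Φ_J`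
on `Φ_I` and `C = [-W; 1]`. The residual is `P_I Φ_J = Φ C`, so since `P_I` is a symmetric
idempotent, `Φ_Jᵀ P_I Φ_J = Cᵀ (Φᵀ Φ) C`. As `Cᵀ C = 1 + Wᵀ W ⪰ 1`,
`Cᵀ (Φᵀ Φ) C - σ² = Cᵀ (Φᵀ Φ - σ²) C + σ² Wᵀ W ⪰ 0`. -/

namespace Matrix

section StarOrdered

variable {R n p : Type*} [CommRing R] [PartialOrder R] [StarRing R] [StarOrderedRing R]
  [Fintype n] [DecidableEq n] [Fintype p]

theorem PosSemidef.conjTranspose_mul_mul_sub_smul_one [DecidableEq p] {M : Matrix n n R} {c : R}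
    (hM : (M - c • 1).PosSemidef) (hc : 0 ≤ c) {C : Matrix n p R}
    (hC : (Cᴴ * C - 1).PosSemidef) : (Cᴴ * M * C - c • 1).PosSemidef := by
  have h : Cᴴ * M * C - c • 1 = Cᴴ * (M - c • 1) * C + c • (Cᴴ * C - 1) := by
    simp only [Matrix.mul_sub, Matrix.sub_mul, Matrix.mul_smul, Matrix.smul_mul, Matrix.mul_one,
      smul_sub]
    abel
  rw [h]
  exact (hM.conjTranspose_mul_mul_same C).add (hC.smul hc)

theorem posSemidef_conjTranspose_fromRows_one_mul_sub_one (X : Matrix p n R) :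
    ((fromRows X 1 : Matrix (p ⊕ n) n R)ᴴ * (fromRows X 1 : Matrix (p ⊕ n) n R) - 1 :
      Matrix n n R).PosSemidef := by
  rw [conjTranspose_fromRows_eq_fromCols_conjTranspose, fromCols_mul_fromRows, conjTranspose_one,
    Matrix.one_mul, add_sub_cancel_right]
  exact posSemidef_conjTranspose_mul_self X

end StarOrdered

section ResidualProjection

variable {R m n p : Type*} [CommRing R] [Fintype m] [Fintype n] [DecidableEq m] [DecidableEq n]

noncomputable def residualProjection (A : Matrix m n R) : Matrix m m R := 1 - A * (Aᵀ * A)⁻¹ * Aᵀ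

theorem transpose_residualProjection (A : Matrix m n R) :
    (residualProjection A)ᵀ = residualProjection A := by
  simp [residualProjection, transpose_nonsing_inv, Matrix.mul_assoc]

theorem residualProjection_mul_self {A : Matrix m n R} (hA : IsUnit (Aᵀ * A).det) :
    residualProjection A * residualProjection A = residualProjection A := by
  have hH : A * (Aᵀ * A)⁻¹ * Aᵀ * (A * (Aᵀ * A)⁻¹ * Aᵀ) = A * (Aᵀ * A)⁻¹ * Aᵀ := by
    rw [show A * (Aᵀ * A)⁻¹ * Aᵀ * (A * (Aᵀ * A)⁻¹ * Aᵀ)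
        = A * ((Aᵀ * A)⁻¹ * (Aᵀ * A) * (Aᵀ * A)⁻¹) * Aᵀ by simp only [Matrix.mul_assoc],
      nonsing_inv_mul _ hA, Matrix.one_mul]
  rw [residualProjection, Matrix.sub_mul, Matrix.mul_sub, Matrix.mul_sub, hH]
  simp

theorem residualProjection_mul [Fintype p] [DecidableEq p] (A : Matrix m n R)
    (B : Matrix m p R) :
    residualProjection A * B =
      fromCols A B * fromRows (-((Aᵀ * A)⁻¹ * Aᵀ * B)) (1 : Matrix p p R) := by
  rw [fromCols_mul_fromRows, residualProjection, Matrix.sub_mul]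
  simp [Matrix.mul_assoc, neg_add_eq_sub]

theorem transpose_mul_residualProjection_mul {A : Matrix m n R} (hA : IsUnit (Aᵀ * A).det)
    (B : Matrix m p R) :
    Bᵀ * residualProjection A * B = (residualProjection A * B)ᵀ * (residualProjection A * B) := by
  rw [transpose_mul, transpose_residualProjection, Matrix.mul_assoc Bᵀ _ (_ * B),
    ← Matrix.mul_assoc _ _ B, residualProjection_mul_self hA, Matrix.mul_assoc]

end ResidualProjection

end Matrix

open Matrix

/-- Singular-value bound for projected submatrices: if the columns of `Φ` are split
into two disjoint groups `Φ_I` and `Φ_J` (together exhausting all columns), `Φ_I` has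
full column rank, and `P_I` is the orthogonal projection onto the orthogonal
complement of the column span of `Φ_I`, then
`Φ_Jᵀ P_I Φ_J ⪰ σ² Id` whenever `Φᵀ Φ ⪰ σ² Id` (i.e. the minimum eigenvalue of
`Φ_Jᵀ P_I Φ_J` is at least the square of the smallest singular value of `Φ`). -/
theorem submatrix_projection_min_eigenvalue_bound
    {m kI kJ : ℕ} (Φ : Matrix (Fin m) (Fin kI ⊕ Fin kJ) ℝ) (σ : ℝ)
    (ΦI : Matrix (Fin m) (Fin kI) ℝ) (ΦJ : Matrix (Fin m) (Fin kJ) ℝ)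
    (hI : ΦI = Φ.submatrix id Sum.inl) (hJ : ΦJ = Φ.submatrix id Sum.inr)
    (hrank : IsUnit (ΦIᵀ * ΦI).det)
    (PI : Matrix (Fin m) (Fin m) ℝ)
    (hPI : PI = 1 - ΦI * (ΦIᵀ * ΦI)⁻¹ * ΦIᵀ)
    (hmin : (Φᵀ * Φ - σ ^ 2 • (1 : Matrix (Fin kI ⊕ Fin kJ) (Fin kI ⊕ Fin kJ) ℝ)).PosSemidef) :
    (ΦJᵀ * PI * ΦJ - σ ^ 2 • (1 : Matrix (Fin kJ) (Fin kJ) ℝ)).PosSemidef := by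
  obtain rfl : PI = residualProjection ΦI := hPI
  have hΦ : Φ = fromCols ΦI ΦJ := by rw [hI, hJ]; exact (fromCols_toCols Φ).symm
  have hC := hmin.conjTranspose_mul_mul_sub_smul_one (sq_nonneg σ)
    (posSemidef_conjTranspose_fromRows_one_mul_sub_one (-((ΦIᵀ * ΦI)⁻¹ * ΦIᵀ * ΦJ)))
  rw [transpose_mul_residualProjection_mul hrank, residualProjection_mul, ← hΦ, transpose_mul]
  simpa only [conjTranspose_eq_transpose_of_trivial, Matrix.mul_assoc] using hC
end

section
/- Let S be an m×k real matrix partitioned columnwise as S = [Φ_I Φ_J] with Φ_I having full column rank. If S'S ⪰ σ²·Id for some σ ≥ 0, then Φ_J'Φ_J − Φ_J'Φ_I(Φ_I'Φ_I)^{-1}Φ_I'Φ_J ⪰ σ²·Id. -/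
/-!
Write `G = Φ_Iᵀ Φ_I` and `C = G⁻¹ Φ_Iᵀ Φ_J`. The Schur complement is the Gram matrix of the
least-squares residual `Φ_J - Φ_I C = S W`, where `W = [-C; Id]`. Since `Wᵀ W = Cᵀ C + Id ⪰ Id`,
`(S W)ᵀ (S W) - σ² Id = Wᵀ (Sᵀ S - σ² Id) W + σ² (Wᵀ W - Id) ⪰ 0`.
-/

open Matrix

namespace Matrix

variable {m n p R : Type*} [Fintype m] [Fintype n]

section CommRing

variable [CommRing R]

-- `A⁻¹ = 0` when `A` is singular.
theorem nonsing_inv_mul_mul_nonsing_inv [DecidableEq n] (A : Matrix n n R) :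
    A⁻¹ * A * A⁻¹ = A⁻¹ := by
  rcases nonsing_inv_cancel_or_zero A with ⟨h, -⟩ | h
  · rw [h, Matrix.one_mul]
  · rw [h, Matrix.zero_mul, Matrix.zero_mul]

theorem transpose_mul_self_sub_mul_gram_inv [DecidableEq n] (X : Matrix m n R)
    (Y : Matrix m p R) :
    (Y - X * ((Xᵀ * X)⁻¹ * (Xᵀ * Y)))ᵀ * (Y - X * ((Xᵀ * X)⁻¹ * (Xᵀ * Y))) =
      Yᵀ * Y - Yᵀ * X * (Xᵀ * X)⁻¹ * Xᵀ * Y := by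
  have hGinv : (Xᵀ * X)⁻¹ᵀ = (Xᵀ * X)⁻¹ := by
    rw [transpose_nonsing_inv, transpose_mul, transpose_transpose]
  have hcancel : (Xᵀ * X)⁻¹ * (Xᵀ * X * ((Xᵀ * X)⁻¹ * (Xᵀ * Y))) = (Xᵀ * X)⁻¹ * (Xᵀ * Y) := by
    rw [← Matrix.mul_assoc, ← Matrix.mul_assoc, nonsing_inv_mul_mul_nonsing_inv]
  simp only [transpose_sub, transpose_mul, transpose_transpose, hGinv, Matrix.sub_mul,
    Matrix.mul_sub, Matrix.mul_assoc]
  simp only [← Matrix.mul_assoc Xᵀ X, hcancel]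
  abel

theorem fromRows_neg_one_transpose_mul_self [Fintype p] [DecidableEq p] (C : Matrix n p R) :
    (fromRows (-C) (1 : Matrix p p R))ᵀ * fromRows (-C) (1 : Matrix p p R) = Cᵀ * C + 1 := by
  simp [transpose_fromRows, fromCols_mul_fromRows]

end CommRing

theorem PosSemidef.transpose_mul_mul_sub_smul_one [Fintype p] [DecidableEq n] [DecidableEq p]
    {X : Matrix m n ℝ} {W : Matrix n p ℝ} {c : ℝ}
    (hX : (Xᵀ * X - c • 1).PosSemidef) (hW : (Wᵀ * W - 1).PosSemidef) (hc : 0 ≤ c) :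
    ((X * W)ᵀ * (X * W) - c • 1).PosSemidef := by
  have hsplit : (X * W)ᵀ * (X * W) - c • 1 = Wᵀ * (Xᵀ * X - c • 1) * W + c • (Wᵀ * W - 1) := by
    simp only [transpose_mul, Matrix.mul_sub, Matrix.sub_mul, Matrix.mul_smul, Matrix.smul_mul,
      Matrix.mul_one, Matrix.mul_assoc, smul_sub]
    abel
  rw [hsplit]
  refine PosSemidef.add ?_ (hW.smul hc)
  simpa only [conjTranspose_eq_transpose_of_trivial] using hX.conjTranspose_mul_mul_same W

end Matrix

theorem schur_complement_lower_bound_general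
    {m kI kJ : ℕ} (S : Matrix (Fin m) (Fin kI ⊕ Fin kJ) ℝ)
    (ΦI : Matrix (Fin m) (Fin kI) ℝ) (ΦJ : Matrix (Fin m) (Fin kJ) ℝ)
    (hI : ΦI = S.submatrix id Sum.inl) (hJ : ΦJ = S.submatrix id Sum.inr)
    (σ : ℝ)
    (hS : (Sᵀ * S - σ ^ 2 • (1 : Matrix (Fin kI ⊕ Fin kJ) (Fin kI ⊕ Fin kJ) ℝ)).PosSemidef) :
    (ΦJᵀ * ΦJ - ΦJᵀ * ΦI * (ΦIᵀ * ΦI)⁻¹ * ΦIᵀ * ΦJ -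
      σ ^ 2 • (1 : Matrix (Fin kJ) (Fin kJ) ℝ)).PosSemidef := by
  set C := (ΦIᵀ * ΦI)⁻¹ * (ΦIᵀ * ΦJ)
  have hS_cols : S = fromCols ΦI ΦJ := by
    ext i (j | j) <;> simp [hI, hJ]
  have hresidual : S * fromRows (-C) (1 : Matrix (Fin kJ) (Fin kJ) ℝ) = ΦJ - ΦI * C := by
    rw [hS_cols, fromCols_mul_fromRows, Matrix.mul_neg, Matrix.mul_one, neg_add_eq_sub]
  have hW : ((fromRows (-C) (1 : Matrix (Fin kJ) (Fin kJ) ℝ))ᵀ *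
      fromRows (-C) (1 : Matrix (Fin kJ) (Fin kJ) ℝ) - 1).PosSemidef := by
    simpa [fromRows_neg_one_transpose_mul_self] using posSemidef_conjTranspose_mul_self C
  rw [← transpose_mul_self_sub_mul_gram_inv, ← hresidual]
  exact hS.transpose_mul_mul_sub_smul_one hW (sq_nonneg σ)

/-- Schur-complement bound: if `S = [Φ_I  Φ_J]` (a columnwise partition), `Φ_I` has
full column rank, and `Sᵀ S ⪰ σ² Id`, then the Schur complement satisfies
`Φ_Jᵀ Φ_J - Φ_Jᵀ Φ_I (Φ_Iᵀ Φ_I)⁻¹ Φ_Iᵀ Φ_J ⪰ σ² Id`. -/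
theorem schur_complement_lower_bound
    {m kI kJ : ℕ} (S : Matrix (Fin m) (Fin kI ⊕ Fin kJ) ℝ)
    (ΦI : Matrix (Fin m) (Fin kI) ℝ) (ΦJ : Matrix (Fin m) (Fin kJ) ℝ)
    (hI : ΦI = S.submatrix id Sum.inl) (hJ : ΦJ = S.submatrix id Sum.inr)
    (hrank : IsUnit (ΦIᵀ * ΦI).det)
    (σ : ℝ) (hσ : 0 ≤ σ)
    (hS : (Sᵀ * S - σ ^ 2 • (1 : Matrix (Fin kI ⊕ Fin kJ) (Fin kI ⊕ Fin kJ) ℝ)).PosSemidef) :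
    (ΦJᵀ * ΦJ - ΦJᵀ * ΦI * (ΦIᵀ * ΦI)⁻¹ * ΦIᵀ * ΦJ -
      σ ^ 2 • (1 : Matrix (Fin kJ) (Fin kJ) ℝ)).PosSemidef :=
  schur_complement_lower_bound_general S ΦI ΦJ hI hJ σ hS
end
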